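/- Let T be an SSYT of shape λ=(λ_1≥λ_2≥0) with entries in {1,2,3} and content μ=(μ_1,μ_2,μ_3) such that μ_1≥μ_2≥μ_3, e_1(T)≠0, and e_2(T)≠0. Then e_1∘e_2(T)=e_2∘e_1(T)=e_{α_1+α_2}(T)≠0. -/

import Mathlib

attribute [local instance] Classical.propDecidable

namespace AtomicPaper

/-- Set the entry at cell `(r, c)` (0-indexed row and column) of the tableau `T` to `a`. -/
def setCell (T : List (List ℕ)) (rc : ℕ × ℕ) (a : ℕ) : List (List ℕ) :=
  T.set rc.1 ((T.getD rc.1 []).set rc.2 a)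

/-- The row word of `T` together with cell positions: rows are read
right to left, top to bottom; entries are pairs `(letter, (row, column))`. -/
def rowWordP (T : List (List ℕ)) : List (ℕ × (ℕ × ℕ)) :=
  ((T.zipIdx.map Prod.swap).map fun p => (((p.2.zipIdx.map Prod.swap).map fun q => (q.2, (p.1, q.1))).reverse)).flatten

/-- Bracketing scan for the letters `i`, `i+1` on a positioned word: returns the pair
`(positions of unmatched i+1's in left-to-right order,
  positions of unmatched i's with the rightmost one first)`,
where an `i` immediately matches a later `i+1` (recursive deletion of factors `i (i+1)`
in the subword on the letters `i`, `i+1`). -/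
def bracket (i : ℕ) (w : List (ℕ × (ℕ × ℕ))) : List (ℕ × ℕ) × List (ℕ × ℕ) :=
  w.foldl
    (fun (st : List (ℕ × ℕ) × List (ℕ × ℕ)) (p : ℕ × (ℕ × ℕ)) =>
      if p.1 = i then (st.1, p.2 :: st.2)
      else if p.1 = i + 1 then
        match st.2 with
        | [] => (st.1 ++ [p.2], [])
        | _ :: tail => (st.1, tail)
      else st)
    ([], [])

/-- The Kashiwara crystal operator `f̃_i`: changes the leftmost unmatched letter `i`
(i.e. the leftmost `i` of the reduced word `w_i^red`) into `i+1`; `none` if there is no such letter. -/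
def ftil (i : ℕ) (T : List (List ℕ)) : Option (List (List ℕ)) :=
  match (bracket i (rowWordP T)).2.getLast? with
  | none => none
  | some rc => some (setCell T rc (i + 1))

/-- The Kashiwara crystal operator `ẽ_i`: changes the rightmost unmatched letter `i+1`
(i.e. the rightmost `i+1` of the reduced word `w_i^red`) into `i`; `none` if there is no such letter. -/
def etil (i : ℕ) (T : List (List ℕ)) : Option (List (List ℕ)) :=
  match (bracket i (rowWordP T)).1.getLast? with
  | none => none
  | some rc => some (setCell T rc i)

/-- The crystal Weyl group action of the simple transposition `s_i`:
if `r > s` it changes the `r - s` rightmost unmatched letters `i+1` into `i`,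
and otherwise the `s - r` leftmost unmatched letters `i` into `i+1`. -/
def siAct (i : ℕ) (T : List (List ℕ)) : List (List ℕ) :=
  let st := bracket i (rowWordP T)
  if st.2.length < st.1.length then
    (st.1.drop st.2.length).foldl (fun U rc => setCell U rc i) T
  else
    (st.2.drop st.1.length).foldl (fun U rc => setCell U rc (i + 1)) T

/-- Apply the crystal actions of the listed simple transpositions, leftmost first. -/
def applyWord (l : List ℕ) (T : List (List ℕ)) : List (List ℕ) :=
  l.foldl (fun U i => siAct i U) T

/-- A reduced word (applied leftmost first) for the shortest permutation `w ∈ S_n` with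
`w(1) = i` and `w(2) = j` (for `i < j`), i.e. with `w(α_1) = ε_i - ε_j`:
`w = (s_{i-1} ⋯ s_1) ∘ (s_{j-1} ⋯ s_2)`. -/
def wWord (i j : ℕ) : List ℕ := List.range' 2 (j - 2) ++ List.range' 1 (i - 1)

/-- The modified crystal operator `f_α = w ∘ f̃_1 ∘ w⁻¹` for the positive root
`α = ε_i - ε_j` (`i < j`), where `w` is the shortest permutation with `w(α_1) = α`. -/
def fRoot (i j : ℕ) (T : List (List ℕ)) : Option (List (List ℕ)) :=
  (ftil 1 (applyWord (wWord i j).reverse T)).map (applyWord (wWord i j))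

/-- The modified crystal operator `e_α = w ∘ ẽ_1 ∘ w⁻¹` for the positive root
`α = ε_i - ε_j` (`i < j`). -/
def eRoot (i j : ℕ) (T : List (List ℕ)) : Option (List (List ℕ)) :=
  (etil 1 (applyWord (wWord i j).reverse T)).map (applyWord (wWord i j))

/-- `T` is a semistandard Young tableau with entries in `{1, …, n}`:
the rows (lists of entries, top row first) are nonempty and weakly increasing,
the row lengths are weakly decreasing (partition shape),
the columns are strictly increasing, and all entries lie in `{1, …, n}`. -/
def IsSSYT (n : ℕ) (T : List (List ℕ)) : Prop :=
  (∀ row ∈ T, row ≠ [] ∧ List.Chain' (· ≤ ·) row) ∧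
  List.Chain' (fun a b => b ≤ a) (T.map List.length) ∧
  (∀ r c, r + 1 < T.length → c < (T.getD (r + 1) []).length →
      (T.getD r []).getD c 0 < (T.getD (r + 1) []).getD c 0) ∧
  (∀ a ∈ T.flatten, 1 ≤ a ∧ a ≤ n)

/-- `contentOf T i` is the number of entries of `T` equal to `i` (letters are 1-based). -/
def contentOf (T : List (List ℕ)) : ℕ → ℕ := fun i => T.flatten.count i

/-- `mrow T k i` is the number of entries equal to `i` in row `k` of `T` (0-indexed rows;
row `k` here corresponds to row `k+1` of the paper). -/
def mrow (T : List (List ℕ)) (k i : ℕ) : ℕ := (T.getD k []).count i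

/-- Schensted insertion of `x` into a weakly increasing row; returns the new row and
the bumped entry, if any. -/
def insertRow (x : ℕ) : List ℕ → List ℕ × Option ℕ
  | [] => ([x], none)
  | a :: rest =>
    if a ≤ x then
      let p := insertRow x rest
      (a :: p.1, p.2)
    else (x :: rest, some a)

/-- Schensted row-insertion of `x` into the tableau `T`. -/
def insertTab : List (List ℕ) → ℕ → List (List ℕ)
  | [], x => [[x]]
  | row :: rest, x =>
    let p := insertRow x row
    match p.2 with
    | none => p.1 :: rest
    | some y => p.1 :: insertTab rest y

/-- The cyclage `C(T)`: remove the bottom-left (south-west) entry `x` of `T` and row-insert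
`x` into the remaining tableau. (For an empty tableau, or one with an empty last row,
this is the identity.) -/
def cyclage (T : List (List ℕ)) : List (List ℕ) :=
  match T.getLast? with
  | none => T
  | some [] => T
  | some (x :: rest) =>
    insertTab (T.dropLast ++ if rest = [] then [] else [rest]) x

/-- The cocharge of `T`: the number of cyclage steps needed to reach a one-row tableau. -/
noncomputable def cocharge (T : List (List ℕ)) : ℕ :=
  sInf {k | (cyclage^[k] T).length ≤ 1}

/-- The Lascoux–Schützenberger charge `c(T) = ‖μ‖ - co(T)`, where `μ` is the content of `T`
and `‖μ‖ = Σ_i (i-1) μ_i` (equivalently, the sum over all entries `a` of `T` of `a - 1`). -/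
noncomputable def chargeT (T : List (List ℕ)) : ℕ :=
  (T.flatten.sum - T.flatten.length) - cocharge T

/-- The sum `μ_1 + ⋯ + μ_j` of the first `j` parts (1-indexed). -/
def sumTo (μ : ℕ → ℕ) (j : ℕ) : ℕ := ∑ i ∈ Finset.Icc 1 j, μ i

/-- `μ` (1-indexed) is a partition with at most `n` parts. -/
def IsPartitionFun (n : ℕ) (μ : ℕ → ℕ) : Prop :=
  (∀ i j, 1 ≤ i → i ≤ j → μ j ≤ μ i) ∧ ∀ i, i = 0 ∨ n < i → μ i = 0

/-- Dominance order on partitions (of the same number) with at most `n` parts. -/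
def DomLE (n : ℕ) (ν μ : ℕ → ℕ) : Prop :=
  (∀ j, sumTo ν j ≤ sumTo μ j) ∧ sumTo ν n = sumTo μ n

def DomLT (n : ℕ) (ν μ : ℕ → ℕ) : Prop := DomLE n ν μ ∧ ∃ i, ν i ≠ μ i

/-- `ν` is covered by `μ` in the dominance order on partitions with at most `n` parts. -/
def DomCovers (n : ℕ) (μ ν : ℕ → ℕ) : Prop :=
  DomLT n ν μ ∧ ∀ κ, IsPartitionFun n κ → ¬(DomLT n ν κ ∧ DomLT n κ μ)

/-- `content(T) - α` for the positive root `α = ε_i - ε_j`. -/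
def contentMinus (T : List (List ℕ)) (i j : ℕ) : ℕ → ℕ := fun k =>
  if k = i then contentOf T i - 1
  else if k = j then contentOf T j + 1
  else contentOf T k

/-- A vertex of the modified crystal graph `𝔹(λ)⁺`: an SSYT of shape `λ` with entries in
`{1, …, n}` whose content is a partition. Here `λ` is given as the list of row lengths. -/
def IsVertex (n : ℕ) (lam : List ℕ) (T : List (List ℕ)) : Prop :=
  IsSSYT n T ∧ T.map List.length = lam ∧ IsPartitionFun n (contentOf T)

/-- The edges of the modified crystal graph `𝔹(λ)⁺`: `T ⇢ f_α(T)` for every positive root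
`α = ε_i - ε_j` such that `content(T) - α` is a partition covered by `content(T)`
in the dominance order. -/
def ModEdge (n : ℕ) (lam : List ℕ) (T T' : List (List ℕ)) : Prop :=
  IsVertex n lam T ∧ IsVertex n lam T' ∧
  ∃ i j, 1 ≤ i ∧ i < j ∧ j ≤ n ∧
    IsPartitionFun n (contentMinus T i j) ∧
    DomCovers n (contentOf T) (contentMinus T i j) ∧
    fRoot i j T = some T'

/-- Two tableaux lie in the same connected component of `𝔹(λ)⁺` (undirected reachability). -/
def SameComp (n : ℕ) (lam : List ℕ) : List (List ℕ) → List (List ℕ) → Prop :=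
  Relation.ReflTransGen fun a b => ModEdge n lam a b ∨ ModEdge n lam b a

/-- `⟨μ - ν, ρ^∨⟩ = Σ_{j=1}^{n-1} Σ_{i=1}^{j} (μ_i - ν_i)`. -/
def pairingRho (n : ℕ) (μ ν : ℕ → ℕ) : ℕ :=
  ∑ j ∈ Finset.Icc 1 (n - 1), (sumTo μ j - sumTo ν j)

/-- `f_{α_1 + α_2} = s_2 ∘ f̃_1 ∘ s_2` (type `A_2`). -/
def fA12 (T : List (List ℕ)) : Option (List (List ℕ)) := (ftil 1 (siAct 2 T)).map (siAct 2)

/-- `f_2 = s_1 ∘ f_{α_1+α_2} ∘ s_1` (type `A_2`). -/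
def f2op (T : List (List ℕ)) : Option (List (List ℕ)) := (fA12 (siAct 1 T)).map (siAct 1)

/-- `e_{α_1 + α_2} = s_2 ∘ ẽ_1 ∘ s_2` (type `A_2`). -/
def eA12 (T : List (List ℕ)) : Option (List (List ℕ)) := (etil 1 (siAct 2 T)).map (siAct 2)

/-- `e_2 = s_1 ∘ e_{α_1+α_2} ∘ s_1` (type `A_2`). -/
def e2op (T : List (List ℕ)) : Option (List (List ℕ)) := (eA12 (siAct 1 T)).map (siAct 1)


def pt (a b c d e : ℕ) : List (List ℕ) :=
  (List.replicate a 1 ++ (List.replicate b 2 ++ List.replicate c 3)) ::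
    (if d + e = 0 then [] else [List.replicate d 2 ++ List.replicate e 3])

def blk (x r lo k : ℕ) : List (ℕ × (ℕ × ℕ)) :=
  ((List.range' lo k).reverse.map fun c => (x, (r, c)))

lemma blk_zero (x r lo : ℕ) : blk x r lo 0 = [] := rfl

lemma blk_succ (x r lo k : ℕ) : blk x r lo (k+1) = (x, (r, lo+k)) :: blk x r lo k := by
  simp [blk, List.range'_concat]

def ef (l : List ℕ) (s : ℕ) : List (ℕ × ℕ) := (l.zipIdx s).map Prod.swap

lemma ef_cons (a : ℕ) (l : List ℕ) (s : ℕ) : ef (a :: l) s = (s, a) :: ef l (s+1) := rfl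

lemma ef_append (l1 l2 : List ℕ) (s : ℕ) : ef (l1 ++ l2) s = ef l1 s ++ ef l2 (s + l1.length) := by
  simp [ef, List.zipIdx_append]

lemma enumFrom_replicate (n s x : ℕ) :
    ef (List.replicate n x) s = (List.range' s n).map fun i => (i, x) := by
  induction n generalizing s with
  | zero => rfl
  | succ n ih => simp [List.replicate_succ, List.range'_succ, ih, ef_cons]

lemma enum_map_rep (n s x r : ℕ) :
    (((ef (List.replicate n x) s).map fun pr : ℕ × ℕ => (pr.2, (r, pr.1))).reverse) =
      blk x r s n := by
  simp [enumFrom_replicate, blk, List.map_map, ← List.map_reverse]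

lemma rowpart (r s p q t : ℕ) :
    (((ef (List.replicate p 1 ++ (List.replicate q 2 ++ List.replicate t 3)) s).map
      fun pr : ℕ × ℕ => (pr.2, (r, pr.1))).reverse) =
      blk 3 r (s+p+q) t ++ blk 2 r (s+p) q ++ blk 1 r s p := by
  rw [ef_append, ef_append, List.map_append,
    List.map_append, List.reverse_append, List.reverse_append, enum_map_rep, enum_map_rep,
    enum_map_rep, List.length_replicate, List.length_replicate, List.append_assoc,
    Nat.add_assoc]

lemma rowWordP_one (r0 : List ℕ) :
    rowWordP [r0] = ((ef r0 0).map fun pr : ℕ × ℕ => (pr.2, (0, pr.1))).reverse := by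
  simp [rowWordP, ef]

lemma rowWordP_two (r0 r1 : List ℕ) :
    rowWordP [r0, r1] = ((ef r0 0).map fun pr : ℕ × ℕ => (pr.2, (0, pr.1))).reverse ++
      ((ef r1 0).map fun pr : ℕ × ℕ => (pr.2, (1, pr.1))).reverse := by
  simp [rowWordP, ef]

lemma rowpart2 (r s q t : ℕ) :
    (((ef (List.replicate q 2 ++ List.replicate t 3) s).map
      fun pr : ℕ × ℕ => (pr.2, (r, pr.1))).reverse) =
      blk 3 r (s+q) t ++ blk 2 r s q := by
  rw [ef_append, List.map_append, List.reverse_append, enum_map_rep, enum_map_rep,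
    List.length_replicate]

lemma word_pt (a b c d e : ℕ) :
    rowWordP (pt a b c d e) =
      blk 3 0 (a+b) c ++ blk 2 0 a b ++ blk 1 0 0 a ++ blk 3 1 d e ++ blk 2 1 0 d := by
  have h1 := rowpart 0 0 a b c
  have h2 := rowpart2 1 0 d e
  simp only [Nat.zero_add] at h1 h2
  by_cases h : d + e = 0
  · obtain ⟨rfl, rfl⟩ : d = 0 ∧ e = 0 := by omega
    rw [pt, if_pos rfl, rowWordP_one, h1]
    simp [blk_zero]
  · rw [pt, if_neg h, rowWordP_two, h1, h2]
    simp [List.append_assoc]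


-- bracket step

def brst (i : ℕ) : List (ℕ × ℕ) × List (ℕ × ℕ) → ℕ × (ℕ × ℕ) → List (ℕ × ℕ) × List (ℕ × ℕ) :=
  fun st p =>
      if p.1 = i then (st.1, p.2 :: st.2)
      else if p.1 = i + 1 then
        match st.2 with
        | [] => (st.1 ++ [p.2], [])
        | _ :: tail => (st.1, tail)
      else st

lemma bracket_eq (i : ℕ) (w : List (ℕ × (ℕ × ℕ))) : bracket i w = w.foldl (brst i) ([], []) := rfl

lemma fold_other (i x r lo k : ℕ) (st : List (ℕ × ℕ) × List (ℕ × ℕ))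
    (hx : x ≠ i) (hx2 : x ≠ i + 1) :
    (blk x r lo k).foldl (brst i) st = st := by
  induction k generalizing st with
  | zero => rfl
  | succ k ih => rw [blk_succ, List.foldl_cons, brst, if_neg hx, if_neg hx2]; exact ih st

lemma fold_i (i r lo k : ℕ) (A B : List (ℕ × ℕ)) :
    (blk i r lo k).foldl (brst i) (A, B) =
      (A, ((List.range' lo k).map fun c => (r, c)) ++ B) := by
  induction k generalizing B with
  | zero => rfl
  | succ k ih =>
    rw [blk_succ, List.foldl_cons,
      show brst i (A, B) (i, r, lo + k) = (A, (r, lo + k) :: B) from by simp [brst],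
      ih, List.range'_concat]
    simp

lemma fold_i1_pop (i r lo k : ℕ) (A B : List (ℕ × ℕ)) (hk : k ≤ B.length) (hi : 0 < i) :
    (blk (i+1) r lo k).foldl (brst i) (A, B) = (A, B.drop k) := by
  induction k generalizing B with
  | zero => rfl
  | succ k ih =>
    rw [blk_succ, List.foldl_cons]
    match B, hk with
    | q :: B', hk =>
      show (blk (i+1) r lo k).foldl (brst i) (brst i (A, q :: B') (i+1, r, lo+k)) = _
      rw [show brst i (A, q :: B') (i+1, r, lo+k) = (A, B') from by simp [brst]]
      rw [ih B' (by simpa using hk)]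
      rfl

lemma fold_i1_empty (i r lo k : ℕ) (A : List (ℕ × ℕ)) (hi : 0 < i) :
    (blk (i+1) r lo k).foldl (brst i) (A, []) =
      (A ++ (List.range' lo k).reverse.map fun c => (r, c), []) := by
  induction k generalizing A with
  | zero => simp [blk_zero]
  | succ k ih =>
    rw [blk_succ, List.foldl_cons]
    rw [show brst i (A, []) (i+1, r, lo+k) = (A ++ [(r, lo+k)], []) from by simp [brst]]
    rw [ih]
    simp [List.range'_concat]

lemma fold_i1_split (i r lo k : ℕ) (A B : List (ℕ × ℕ)) (hk : B.length ≤ k) (hi : 0 < i) :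
    (blk (i+1) r lo k).foldl (brst i) (A, B) =
      (A ++ (List.range' lo (k - B.length)).reverse.map fun c => (r, c), []) := by
  obtain ⟨j, rfl⟩ : ∃ j, k = j + B.length := ⟨k - B.length, by omega⟩
  simp only [Nat.add_sub_cancel]
  have hsplit : blk (i+1) r lo (j + B.length) =
      blk (i+1) r (lo + j) B.length ++ blk (i+1) r lo j := by
    rw [blk, blk, blk, ← List.map_append, ← List.reverse_append]
    rw [List.range'_append_1]
  rw [hsplit, List.foldl_append, fold_i1_pop i r _ _ A B le_rfl hi, List.drop_length,
    fold_i1_empty _ _ _ _ _ hi]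

lemma drop_map_range' (s n k : ℕ) (f : ℕ → ℕ × ℕ) (h : k ≤ n) :
    ((List.range' s n).map f).drop k = ((List.range' (s + k) (n - k)).map f) := by
  obtain ⟨j, rfl⟩ : ∃ j, n = j + k := ⟨n - k, by omega⟩
  rw [Nat.add_sub_cancel, Nat.add_comm j k, ← List.range'_append_1 (s := s) (m := k) (n := j), List.map_append,
    List.drop_append_of_le_length (by simp), List.drop_eq_nil_of_le (by simp), List.nil_append]

lemma bracket1_pt (a b c d e : ℕ) (hda : d ≤ a) :
    bracket 1 (rowWordP (pt a b c d e)) =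
      ((List.range' a b).reverse.map fun c => ((0:ℕ), c),
       (List.range' d (a - d)).map fun c => ((0:ℕ), c)) := by
  rw [bracket_eq, word_pt, List.foldl_append, List.foldl_append, List.foldl_append,
    List.foldl_append]
  rw [fold_other 1 3 0 (a+b) c _ (by norm_num) (by norm_num)]
  rw [show (2:ℕ) = 1 + 1 from rfl, fold_i1_split 1 0 a b _ _ (by simp) one_pos]
  simp only [List.length_nil, Nat.sub_zero, List.nil_append]
  rw [fold_i 1 0 0 a]
  rw [fold_other 1 3 1 d e _ (by norm_num) (by norm_num)]
  rw [fold_i1_pop 1 1 0 d _ _ (by simpa using hda) one_pos]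
  rw [List.append_nil, drop_map_range' 0 a d _ hda, Nat.zero_add]

lemma bracket2_pt_le (a b c d e : ℕ) (hbe : e ≤ b) :
    bracket 2 (rowWordP (pt a b c d e)) =
      ((List.range' (a+b) c).reverse.map fun c => ((0:ℕ), c),
       ((List.range' 0 d).map fun c => ((1:ℕ), c)) ++
         (List.range' (a+e) (b-e)).map fun c => ((0:ℕ), c)) := by
  rw [bracket_eq, word_pt, List.foldl_append, List.foldl_append, List.foldl_append,
    List.foldl_append]
  rw [show (3:ℕ) = 2 + 1 from rfl, fold_i1_split 2 0 (a+b) c _ _ (by simp) two_pos]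
  simp only [List.length_nil, Nat.sub_zero, List.nil_append]
  rw [fold_i 2 0 a b]
  rw [List.append_nil, fold_other 2 1 0 0 a _ (by norm_num) (by norm_num)]
  rw [fold_i1_pop 2 1 d e _ _ (by simpa using hbe) two_pos]
  rw [drop_map_range' a b e _ hbe, fold_i 2 1 0 d]

lemma bracket2_pt_gt (a b c d e : ℕ) (hbe : b < e) :
    bracket 2 (rowWordP (pt a b c d e)) =
      (((List.range' (a+b) c).reverse.map fun c => ((0:ℕ), c)) ++
         (List.range' d (e-b)).reverse.map fun c => ((1:ℕ), c),
       (List.range' 0 d).map fun c => ((1:ℕ), c)) := by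
  rw [bracket_eq, word_pt, List.foldl_append, List.foldl_append, List.foldl_append,
    List.foldl_append]
  rw [show (3:ℕ) = 2 + 1 from rfl, fold_i1_split 2 0 (a+b) c _ _ (by simp) two_pos]
  simp only [List.length_nil, Nat.sub_zero, List.nil_append]
  rw [fold_i 2 0 a b]
  rw [List.append_nil, fold_other 2 1 0 0 a _ (by norm_num) (by norm_num)]
  rw [fold_i1_split 2 1 d e _ _ (by simp; omega) two_pos]
  rw [fold_i 2 1 0 d, List.append_nil]
  simp only [List.length_map, List.length_range']

lemma drop_app_ge {l1 l2 : List (ℕ × ℕ)} {n : ℕ} (h : l1.length ≤ n) :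
    (l1 ++ l2).drop n = l2.drop (n - l1.length) := by
  obtain ⟨j, rfl⟩ : ∃ j, n = l1.length + j := ⟨n - l1.length, by omega⟩
  rw [List.drop_append, Nat.add_sub_cancel_left, List.drop_eq_nil_of_le (by simp), List.nil_append]

lemma drop_rev_map_range' (s n k : ℕ) (f : ℕ → ℕ × ℕ) (h : k ≤ n) :
    ((List.range' s n).reverse.map f).drop k = (List.range' s (n - k)).reverse.map f := by
  obtain ⟨j, rfl⟩ : ∃ j, n = k + j := ⟨n - k, by omega⟩
  rw [Nat.add_sub_cancel_left, Nat.add_comm k j, ← List.range'_append_1 (s := s) (m := j) (n := k), List.reverse_append, List.map_append,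
    List.drop_append_of_le_length (by simp), List.drop_eq_nil_of_le (by simp), List.nil_append]

lemma set_getD_self (T : List (List ℕ)) (r : ℕ) : T.set r (T.getD r []) = T := by
  induction T generalizing r with
  | nil => rfl
  | cons x t ih =>
    cases r with
    | zero => rfl
    | succ r => simpa [List.getD] using congrArg (x :: ·) (ih r)

lemma getD_setCell (T : List (List ℕ)) (r c v : ℕ) :
    (setCell T (r, c) v).getD r [] = (T.getD r []).set c v := by
  rw [setCell]
  by_cases h : r < T.length
  · rw [List.getD_eq_getElem _ _ (by simpa using h), List.getElem_set_self]
  · have hT : T.length ≤ r := by omega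
    rw [List.set_eq_of_length_le hT, List.getD_eq_default _ _ hT]
    simp

lemma foldT (L : List ℕ) (r v : ℕ) (T : List (List ℕ)) :
    (L.map fun c => (r, c)).foldl (fun U rc => setCell U rc v) T =
      T.set r (L.foldl (fun w c => w.set c v) (T.getD r [])) := by
  induction L generalizing T with
  | nil => exact (set_getD_self T r).symm
  | cons c L ih =>
    rw [List.map_cons, List.foldl_cons, List.foldl_cons, ih, getD_setCell]
    show (List.set _ _ _).set r _ = _
    rw [List.set_set]

lemma set_app (X W : List ℕ) (n v : ℕ) : (X ++ W).set (X.length + n) v = X ++ W.set n v := by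
  induction X with
  | nil => simp
  | cons x X ih => simpa [List.length_cons, Nat.succ_add] using congrArg (x :: ·) (ih)

lemma rowfold_inc (v : ℕ) (Y : List ℕ) : ∀ (X Z : List ℕ),
    (List.range' X.length Y.length).foldl (fun w c => w.set c v) (X ++ Y ++ Z) =
      X ++ List.replicate Y.length v ++ Z := by
  induction Y with
  | nil => intro X Z; simp
  | cons y Y ih =>
    intro X Z
    rw [List.length_cons, List.range'_succ, List.foldl_cons]
    have h1 : (X ++ (y :: Y) ++ Z).set X.length v = (X ++ [v]) ++ Y ++ Z := by
      have h0 := set_app X ((y :: Y) ++ Z) 0 v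
      simp only [Nat.add_zero] at h0
      simpa [List.append_assoc] using h0
    rw [h1, show X.length + 1 = (X ++ [v]).length by simp, ih (X ++ [v]) Z]
    simp [List.replicate_succ]

lemma rowfold_dec (v : ℕ) (Y : List ℕ) : ∀ (X Z : List ℕ),
    ((List.range' X.length Y.length).reverse).foldl (fun w c => w.set c v) (X ++ Y ++ Z) =
      X ++ List.replicate Y.length v ++ Z := by
  induction Y using List.reverseRecOn with
  | nil => intro X Z; simp
  | append_singleton Y y ih =>
    intro X Z
    rw [List.length_append, List.length_singleton, List.range'_concat, List.reverse_append,
      List.reverse_singleton, List.singleton_append, List.foldl_cons]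
    have h1 : (X ++ (Y ++ [y]) ++ Z).set (X.length + 1 * Y.length) v = X ++ Y ++ ([v] ++ Z) := by
      rw [one_mul, ← List.length_append (as := X) (bs := Y)]
      have h0 := set_app (X ++ Y) ([y] ++ Z) 0 v
      simp only [Nat.add_zero] at h0
      simpa [List.append_assoc] using h0
    rw [h1, ih X ([v] ++ Z)]
    simp [List.replicate_succ']


-- the crystal operators, copied from the problem file

lemma set_app' (X W : List ℕ) (n m v : ℕ) (h : m = X.length + n) :
    (X ++ W).set m v = X ++ W.set n v := by subst h; exact set_app X W n v

lemma rowfold_inc' (v lo k : ℕ) (X Y Z : List ℕ) (hX : X.length = lo) (hY : Y.length = k) :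
    (List.range' lo k).foldl (fun w c => w.set c v) (X ++ (Y ++ Z)) =
      X ++ (List.replicate k v ++ Z) := by
  subst hX; subst hY
  have h0 := rowfold_inc v Y X Z
  simpa [List.append_assoc] using h0

lemma rowfold_dec' (v lo k : ℕ) (X Y Z : List ℕ) (hX : X.length = lo) (hY : Y.length = k) :
    ((List.range' lo k).reverse).foldl (fun w c => w.set c v) (X ++ (Y ++ Z)) =
      X ++ (List.replicate k v ++ Z) := by
  subst hX; subst hY
  have h0 := rowfold_dec v Y X Z
  simpa [List.append_assoc] using h0

lemma pt_getD0 (a b c d e : ℕ) :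
    (pt a b c d e).getD 0 [] =
      List.replicate a 1 ++ (List.replicate b 2 ++ List.replicate c 3) := rfl

lemma pt_getD1 (a b c d e : ℕ) (h : d + e ≠ 0) :
    (pt a b c d e).getD 1 [] = List.replicate d 2 ++ List.replicate e 3 := by
  rw [pt, if_neg h]; rfl

lemma pt_set0 (a b c d e a' b' c' : ℕ) :
    (pt a b c d e).set 0
      (List.replicate a' 1 ++ (List.replicate b' 2 ++ List.replicate c' 3)) =
      pt a' b' c' d e := by
  rw [pt, pt]; rfl

lemma pt_set1 (a b c d e d' e' : ℕ) (h : d + e ≠ 0) (h' : d' + e' ≠ 0) :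
    (pt a b c d e).set 1 (List.replicate d' 2 ++ List.replicate e' 3) = pt a b c d' e' := by
  rw [pt, if_neg h, pt, if_neg h']; rfl

lemma split2 (x b k1 k2 : ℕ) (h : b = k1 + k2) :
    List.replicate b x = List.replicate k1 x ++ List.replicate k2 x := by
  subst h; exact List.replicate_add k1 k2 x

lemma rep_merge_l (m n v : ℕ) (L : List ℕ) :
    List.replicate m v ++ (List.replicate n v ++ L) = List.replicate (m+n) v ++ L := by
  rw [← List.append_assoc, ← List.replicate_add]

lemma rep_merge (m n v : ℕ) :
    List.replicate m v ++ List.replicate n v = List.replicate (m+n) v :=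
  (List.replicate_add m n v).symm

lemma rep_snoc_cons (a v : ℕ) (L : List ℕ) :
    List.replicate a v ++ (v :: L) = List.replicate (a+1) v ++ L := by
  simp [List.replicate_succ', List.append_assoc]

lemma setCell0 (T : List (List ℕ)) (c v : ℕ) :
    setCell T (0, c) v = T.set 0 ((T.getD 0 []).set c v) := rfl

lemma getLast?_rev_map_range' (s n : ℕ) (f : ℕ → ℕ × ℕ) (h : 1 ≤ n) :
    ((List.range' s n).reverse.map f).getLast? = some (f s) := by
  obtain ⟨n', rfl⟩ : ∃ n', n = n' + 1 := ⟨n - 1, by omega⟩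
  rw [List.map_reverse, List.getLast?_reverse, List.head?_map, List.range'_succ]
  rfl

-- ẽ₁ on pt

lemma E1_none (a b c d e : ℕ) (hda : d ≤ a) (hb : b = 0) :
    etil 1 (pt a b c d e) = none := by
  subst hb
  rw [etil, bracket1_pt a 0 c d e hda]
  rfl

lemma E1_some (a b c d e : ℕ) (hda : d ≤ a) (hb : 1 ≤ b) :
    etil 1 (pt a b c d e) = some (pt (a+1) (b-1) c d e) := by
  obtain ⟨b', rfl⟩ : ∃ b', b = b' + 1 := ⟨b - 1, by omega⟩
  rw [etil, bracket1_pt a (b'+1) c d e hda]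
  show (match ((List.range' a (b'+1)).reverse.map fun c => ((0:ℕ), c)).getLast? with
    | none => none
    | some rc => some (setCell (pt a (b'+1) c d e) rc 1)) = _
  rw [getLast?_rev_map_range' a (b'+1) _ (by omega)]
  show some (setCell (pt a (b'+1) c d e) (0, a) 1) = _
  rw [setCell0, pt_getD0, set_app' _ _ 0 a 1 (by simp), List.replicate_succ, List.cons_append,
    List.set_cons_zero]
  rw [show List.replicate a 1 ++ (1 :: (List.replicate b' 2 ++ List.replicate c 3)) =
      List.replicate (a+1) 1 ++ (List.replicate b' 2 ++ List.replicate c 3) from by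
    simp [List.replicate_succ', List.append_assoc], pt_set0]
  simp

-- s₁ on pt

lemma S1_pt (a b c d e : ℕ) (hda : d ≤ a) :
    siAct 1 (pt a b c d e) = pt (b+d) (a-d) c d e := by
  rw [siAct]
  simp only [Nat.reduceAdd]
  simp only [bracket1_pt a b c d e hda, List.length_map, List.length_reverse,
    List.length_range']
  split_ifs with hif
  · -- a - d < b : set the first b-(a-d) twos (cols a..b+d-1) to 1
    rw [drop_rev_map_range' a b (a-d) _ (by omega), foldT, pt_getD0,
      split2 2 b (b-(a-d)) (a-d) (by omega), List.append_assoc,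
      rowfold_dec' 1 a (b-(a-d)) (List.replicate a 1) (List.replicate (b-(a-d)) 2)
        (List.replicate (a-d) 2 ++ List.replicate c 3) (by simp) (by simp),
      rep_merge_l, show a + (b-(a-d)) = b + d from by omega, pt_set0]
  · -- b ≤ a - d : set cols d+b..a-1 (ones) to 2
    rw [drop_map_range' d (a-d) b _ (by omega), foldT, pt_getD0,
      split2 1 a (d+b) (a-d-b) (by omega), List.append_assoc,
      rowfold_inc' 2 (d+b) (a-d-b) (List.replicate (d+b) 1) (List.replicate (a-d-b) 1)
        (List.replicate b 2 ++ List.replicate c 3) (by simp) (by simp),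
      rep_merge_l, show a-d-b + b = a - d from by omega, show d + b = b + d from by omega]
    exact pt_set0 ..

lemma getD0_set1 (T : List (List ℕ)) (w : List ℕ) : (T.set 1 w).getD 0 [] = T.getD 0 [] := by
  match T with
  | [] => rfl
  | x :: t => rfl

lemma setCell1 (T : List (List ℕ)) (c v : ℕ) :
    setCell T (1, c) v = T.set 1 ((T.getD 1 []).set c v) := rfl

-- s₂ on pt, four cases

lemma S2_bb (a b c d e : ℕ) (hbe : e ≤ b) (hdc : d ≤ c) :
    siAct 2 (pt a b c d e) = pt a (c+e-d) (b+d-e) d e := by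
  rw [siAct]
  simp only [Nat.reduceAdd]
  simp only [bracket2_pt_le a b c d e hbe, List.length_append, List.length_map,
    List.length_reverse, List.length_range']
  split_ifs with hif
  · -- branch D : d + (b-e) < c, set 2 on rightmost c-(d+(b-e)) threes of row 0
    rw [drop_rev_map_range' (a+b) c (d+(b-e)) _ (by omega), foldT, pt_getD0,
      split2 3 c (c-(d+(b-e))) (d+(b-e)) (by omega),
      ← List.append_assoc (List.replicate a 1) (List.replicate b 2),
      rowfold_dec' 2 (a+b) (c-(d+(b-e))) (List.replicate a 1 ++ List.replicate b 2)
        (List.replicate (c-(d+(b-e))) 3) (List.replicate (d+(b-e)) 3)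
        (by simp only [List.length_append, List.length_replicate]) (by simp),
      List.append_assoc, rep_merge_l,
      show b + (c-(d+(b-e))) = c+e-d from by omega,
      show d + (b-e) = b+d-e from by omega, pt_set0]
  · -- branch A : c ≤ d + (b-e), set 3 on rightmost twos of row 0
    rw [drop_app_ge (by simp only [List.length_map, List.length_range']; omega)]
    simp only [List.length_map, List.length_range']
    rw [drop_map_range' (a+e) (b-e) (c-d) _ (by omega), foldT, pt_getD0,
      split2 2 b (e+(c-d)) (b-e-(c-d)) (by omega),
      List.append_assoc (List.replicate (e+(c-d)) 2),
      ← List.append_assoc (List.replicate a 1) (List.replicate (e+(c-d)) 2),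
      rowfold_inc' 3 (a+e+(c-d)) (b-e-(c-d))
        (List.replicate a 1 ++ List.replicate (e+(c-d)) 2)
        (List.replicate (b-e-(c-d)) 2) (List.replicate c 3)
        (by simp only [List.length_append, List.length_replicate]; omega) (by simp),
      List.append_assoc, rep_merge,
      show e+(c-d) = c+e-d from by omega,
      show b-e-(c-d) + c = b+d-e from by omega, pt_set0]

lemma S2_bc (a b c d e : ℕ) (hbe : e ≤ b) (hdc : c < d) :
    siAct 2 (pt a b c d e) = pt a e (b+c-e) c (d+e-c) := by
  rw [siAct]
  simp only [Nat.reduceAdd]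
  simp only [bracket2_pt_le a b c d e hbe, List.length_append, List.length_map,
    List.length_reverse, List.length_range']
  split_ifs with hif
  · omega
  · rw [List.drop_append_of_le_length (by simp only [List.length_map, List.length_range']; omega),
      drop_map_range' 0 d c _ (by omega), Nat.zero_add, List.foldl_append,
      foldT (List.range' c (d-c)) 1 3, pt_getD1 a b c d e (by omega),
      split2 2 d c (d-c) (by omega), List.append_assoc,
      rowfold_inc' 3 c (d-c) (List.replicate c 2) (List.replicate (d-c) 2)
        (List.replicate e 3) (by simp) (by simp),
      rep_merge (d-c) e 3, pt_set1 a b c d e c ((d-c)+e) (by omega) (by omega),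
      foldT (List.range' (a+e) (b-e)) 0 3, pt_getD0,
      split2 2 b e (b-e) (by omega), List.append_assoc (List.replicate e 2),
      ← List.append_assoc (List.replicate a 1) (List.replicate e 2),
      rowfold_inc' 3 (a+e) (b-e) (List.replicate a 1 ++ List.replicate e 2)
        (List.replicate (b-e) 2) (List.replicate c 3)
        (by simp only [List.length_append, List.length_replicate]) (by simp),
      List.append_assoc, rep_merge (b-e) c 3,
      show (b-e) + c = b+c-e from by omega,
      show (d-c) + e = d+e-c from by omega, pt_set0]

lemma S2_cb (a b c d e : ℕ) (hbe : b < e) (hdc : d ≤ c) :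
    siAct 2 (pt a b c d e) = pt a (b+c-d) d (d+e-b) b := by
  rw [siAct]
  simp only [Nat.reduceAdd]
  simp only [bracket2_pt_gt a b c d e hbe, List.length_append, List.length_map,
    List.length_reverse, List.length_range']
  split_ifs with hif
  · rw [List.drop_append_of_le_length
        (by simp only [List.length_map, List.length_reverse, List.length_range']; omega),
      drop_rev_map_range' (a+b) c d _ (by omega), List.foldl_append,
      foldT ((List.range' (a+b) (c-d)).reverse) 0 2, pt_getD0,
      split2 3 c (c-d) d (by omega),
      ← List.append_assoc (List.replicate a 1) (List.replicate b 2),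
      rowfold_dec' 2 (a+b) (c-d) (List.replicate a 1 ++ List.replicate b 2)
        (List.replicate (c-d) 3) (List.replicate d 3)
        (by simp only [List.length_append, List.length_replicate]) (by simp),
      List.append_assoc, rep_merge_l,
      show b + (c-d) = b+c-d from by omega, pt_set0,
      foldT ((List.range' d (e-b)).reverse) 1 2, pt_getD1 a (b+c-d) d d e (by omega),
      split2 3 e (e-b) b (by omega),
      rowfold_dec' 2 d (e-b) (List.replicate d 2) (List.replicate (e-b) 3)
        (List.replicate b 3) (by simp) (by simp),
      rep_merge_l, show d + (e-b) = d+e-b from by omega,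
      pt_set1 a (b+c-d) d d e (d+e-b) b (by omega) (by omega)]
  · omega

lemma S2_cc (a b c d e : ℕ) (hbe : b < e) (hdc : c < d) :
    siAct 2 (pt a b c d e) = pt a b c (c+e-b) (b+d-c) := by
  rw [siAct]
  simp only [Nat.reduceAdd]
  simp only [bracket2_pt_gt a b c d e hbe, List.length_append, List.length_map,
    List.length_reverse, List.length_range']
  split_ifs with hif
  · rw [drop_app_ge
        (by simp only [List.length_map, List.length_reverse, List.length_range']; omega)]
    simp only [List.length_map, List.length_reverse, List.length_range']
    rw [drop_rev_map_range' d (e-b) (d-c) _ (by omega), foldT, pt_getD1 a b c d e (by omega),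
      split2 3 e (e-b-(d-c)) (b+d-c) (by omega),
      rowfold_dec' 2 d (e-b-(d-c)) (List.replicate d 2) (List.replicate (e-b-(d-c)) 3)
        (List.replicate (b+d-c) 3) (by simp) (by simp),
      rep_merge_l, show d + (e-b-(d-c)) = c+e-b from by omega,
      pt_set1 a b c d e (c+e-b) (b+d-c) (by omega) (by omega)]
  · rw [drop_map_range' 0 d (c+(e-b)) _ (by omega), Nat.zero_add, foldT,
      pt_getD1 a b c d e (by omega),
      split2 2 d (c+(e-b)) (d-(c+(e-b))) (by omega), List.append_assoc,
      rowfold_inc' 3 (c+(e-b)) (d-(c+(e-b))) (List.replicate (c+(e-b)) 2)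
        (List.replicate (d-(c+(e-b))) 2) (List.replicate e 3) (by simp) (by simp),
      rep_merge (d-(c+(e-b))) e 3,
      show (d-(c+(e-b))) + e = b+d-c from by omega,
      show c+(e-b) = c+e-b from by omega,
      pt_set1 a b c d e (c+e-b) (b+d-c) (by omega) (by omega)]

lemma flatten_pt (a b c d e : ℕ) :
    (pt a b c d e).flatten =
      (List.replicate a 1 ++ (List.replicate b 2 ++ List.replicate c 3)) ++
        (List.replicate d 2 ++ List.replicate e 3) := by
  by_cases h : d + e = 0
  · obtain ⟨rfl, rfl⟩ : d = 0 ∧ e = 0 := by omega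
    rw [pt, if_pos rfl]
    simp
  · rw [pt, if_neg h]
    simp

lemma content_pt1 (a b c d e : ℕ) : contentOf (pt a b c d e) 1 = a := by
  rw [contentOf, flatten_pt]
  simp [List.count_append, List.count_replicate]

lemma content_pt2 (a b c d e : ℕ) : contentOf (pt a b c d e) 2 = b + d := by
  rw [contentOf, flatten_pt]
  simp [List.count_append, List.count_replicate]

lemma content_pt3 (a b c d e : ℕ) : contentOf (pt a b c d e) 3 = c + e := by
  rw [contentOf, flatten_pt]
  simp [List.count_append, List.count_replicate]

lemma pt_congr {a b c d e a' b' c' d' e' : ℕ} (h1 : a = a') (h2 : b = b') (h3 : c = c')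
    (h4 : d = d') (h5 : e = e') : pt a b c d e = pt a' b' c' d' e' := by
  subst h1; subst h2; subst h3; subst h4; subst h5; rfl

lemma sorted_row (l : List ℕ) (hs : List.Chain' (· ≤ ·) l) (hm : ∀ x ∈ l, 1 ≤ x ∧ x ≤ 3) :
    ∃ p q r, l = List.replicate p 1 ++ (List.replicate q 2 ++ List.replicate r 3) := by
  induction l with
  | nil => exact ⟨0, 0, 0, rfl⟩
  | cons x l ih =>
    obtain ⟨hhd, htl⟩ := List.isChain_cons.mp hs
    obtain ⟨p, q, r, rfl⟩ := ih htl (fun y hy => hm y (List.mem_cons_of_mem x hy))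
    have hx := hm x (List.mem_cons_self (a := x) (l := _))
    obtain rfl | rfl | rfl : x = 1 ∨ x = 2 ∨ x = 3 := by omega
    · exact ⟨p+1, q, r, by simp [List.replicate_succ]⟩
    · have hp : p = 0 := by
        by_contra hp0
        obtain ⟨p', rfl⟩ : ∃ p', p = p' + 1 := ⟨p - 1, by omega⟩
        have := hhd 1 (by simp [List.replicate_succ])
        omega
      subst hp
      exact ⟨0, q+1, r, by simp [List.replicate_succ]⟩
    · have hp : p = 0 := by
        by_contra hp0
        obtain ⟨p', rfl⟩ : ∃ p', p = p' + 1 := ⟨p - 1, by omega⟩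
        have := hhd 1 (by simp [List.replicate_succ])
        omega
      subst hp
      have hq : q = 0 := by
        by_contra hq0
        obtain ⟨q', rfl⟩ : ∃ q', q = q' + 1 := ⟨q - 1, by omega⟩
        have := hhd 2 (by simp [List.replicate_succ])
        omega
      subst hq
      exact ⟨0, 0, r+1, by simp [List.replicate_succ]⟩

lemma row3_getD (p q r i : ℕ) (h : i < p + q + r) :
    ((List.replicate p 1 ++ (List.replicate q 2 ++ List.replicate r 3)).getD i 0) =
      if i < p then 1 else if i < p + q then 2 else 3 := by
  by_cases h1 : i < p
  · rw [List.getD_append _ _ _ _ (by simpa using h1), if_pos h1,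
      List.getD_eq_getElem _ _ (by simpa using h1), List.getElem_replicate]
  · rw [List.getD_append_right _ _ _ _ (by simpa using h1), if_neg h1, List.length_replicate]
    by_cases h2 : i < p + q
    · rw [List.getD_append _ _ _ _ (by simp; omega), if_pos h2,
        List.getD_eq_getElem _ _ (by simp; omega), List.getElem_replicate]
    · rw [List.getD_append_right _ _ _ _ (by simp; omega), if_neg h2, List.length_replicate,
        List.getD_eq_getElem _ _ (by simp; omega), List.getElem_replicate]

lemma row3_length (p q r : ℕ) :
    (List.replicate p 1 ++ (List.replicate q 2 ++ List.replicate r 3)).length = p + q + r := by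
  simp; omega

lemma classify (T : List (List ℕ)) (hT : IsSSYT 3 T) (hrows : T.length ≤ 2) :
    T = [] ∨ ∃ a b c d e, T = pt a b c d e ∧ d ≤ a ∧ d + e ≤ a + b := by
  obtain ⟨hrow, hlen, hcol, hent⟩ := hT
  match T, hrows with
  | [], _ => exact Or.inl rfl
  | [r0], _ =>
    right
    obtain ⟨a, b, c, rfl⟩ := sorted_row r0 (hrow r0 (by simp)).2
      (fun x hx => hent x (by simpa using hx))
    exact ⟨a, b, c, 0, 0, by rw [pt, if_pos rfl], by omega, by omega⟩
  | [r0, r1], _ =>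
    right
    obtain ⟨a, b, c, rfl⟩ := sorted_row r0 (hrow r0 (by simp)).2
      (fun x hx => hent x (by simp [hx]))
    obtain ⟨p, q, t, rfl⟩ := sorted_row r1 (hrow r1 (by simp)).2
      (fun x hx => hent x (by simp [hx]))
    have hr1ne : 0 < p + q + t := by
      have := (hrow _ (show _ ∈ [_, _] from by simp : List.replicate p 1 ++
        (List.replicate q 2 ++ List.replicate t 3) ∈ _)).1
      by_contra h0
      obtain ⟨rfl, rfl, rfl⟩ : p = 0 ∧ q = 0 ∧ t = 0 := by omega
      simp at this
    have hlen01 : p + q + t ≤ a + b + c := by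
      have h' := (List.isChain_cons_cons.mp hlen).1
      simp only [row3_length] at h'
      omega
    have hcolget : ∀ i, i < p + q + t →
        ((List.replicate a 1 ++ (List.replicate b 2 ++ List.replicate c 3)).getD i 0 <
          (List.replicate p 1 ++ (List.replicate q 2 ++ List.replicate t 3)).getD i 0) := by
      intro i hi
      have h0 := hcol 0 i (by simp) (by simp only [List.getD]; simp [row3_length]; omega)
      simpa using h0
    have hp : p = 0 := by
      by_contra hp0
      have h0 := hcolget 0 (by omega)
      rw [row3_getD _ _ _ _ (by omega), row3_getD _ _ _ _ (by omega)] at h0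
      split_ifs at h0 <;> omega
    subst hp
    have hda : q ≤ a := by
      by_contra hqa
      have h0 := hcolget a (by omega)
      rw [row3_getD _ _ _ _ (by omega), row3_getD _ _ _ _ (by omega)] at h0
      split_ifs at h0 <;> omega
    have hde : q + t ≤ a + b := by
      by_contra hab
      have h0 := hcolget (a+b) (by omega)
      rw [row3_getD _ _ _ _ (by omega), row3_getD _ _ _ _ (by omega)] at h0
      split_ifs at h0 <;> omega
    refine ⟨a, b, c, q, t, ?_, hda, hde⟩
    rw [pt, if_neg (by omega)]
    simp


/-- Let `T` be an SSYT of shape `λ = (λ_1 ≥ λ_2 ≥ 0)` with entries in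
`{1,2,3}` and content `μ` with `μ_1 ≥ μ_2 ≥ μ_3`, `e_1(T) ≠ 0` and `e_2(T) ≠ 0`. Then
`e_1 ∘ e_2 (T) = e_2 ∘ e_1 (T) = e_{α_1+α_2}(T) ≠ 0`. -/
theorem statement13 (T : List (List ℕ)) (hT : IsSSYT 3 T) (hrows : T.length ≤ 2)
    (h12 : contentOf T 2 ≤ contentOf T 1) (h23 : contentOf T 3 ≤ contentOf T 2)
    (he1 : (etil 1 T).isSome) (he2 : (e2op T).isSome) :
    (e2op T).bind (etil 1) = (etil 1 T).bind e2op ∧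
    (etil 1 T).bind e2op = eA12 T ∧
    (eA12 T).isSome := by
  rcases classify T hT hrows with rfl | ⟨a, b, c, d, e, rfl, hda, hde⟩
  · rw [show etil 1 ([] : List (List ℕ)) = none from rfl] at he1
    simp at he1
  rw [content_pt2, content_pt1] at h12
  rw [content_pt3, content_pt2] at h23
  have hb : 1 ≤ b := by
    by_contra hb0
    rw [E1_none a b c d e hda (by omega)] at he1
    simp at he1
  have hT1 := S1_pt a b c d e (by omega)
  by_cases hb1 : e ≤ a - d
  case pos =>
    by_cases hc2 : d ≤ c
    case pos =>
      have hT2 := S2_bb (b + d) (a - d) c d e (by omega) (by omega)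
      by_cases hS3 : 1 ≤ (c + e) - d
      case pos =>
        have hT3 := E1_some (b + d) ((c + e) - d) (((a - d) + d) - e) d e (by omega) (by omega)
        by_cases hb4 : e ≤ ((c + e) - d) - 1
        case pos =>
          have hT4 := S2_bb ((b + d) + 1) (((c + e) - d) - 1) (((a - d) + d) - e) d e (by omega) (by omega)
          have hT5 := S1_pt ((b + d) + 1) (((((a - d) + d) - e) + e) - d) (((((c + e) - d) - 1) + d) - e) d e (by omega)
          have hU1 := S2_bb a b c d e (by omega) (by omega)
          have hU2 := E1_some a ((c + e) - d) ((b + d) - e) d e (by omega) (by omega)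
          have hU3 := S2_bb (a + 1) (((c + e) - d) - 1) ((b + d) - e) d e (by omega) (by omega)
          have he1v := E1_some a b c d e (by omega) (by omega)
          have hV1 := S1_pt (a + 1) (b - 1) c d e (by omega)
          have hV2 := S2_bb ((b - 1) + d) ((a + 1) - d) c d e (by omega) (by omega)
          have hV3 := E1_some ((b - 1) + d) ((c + e) - d) ((((a + 1) - d) + d) - e) d e (by omega) (by omega)
          have hV4 := S2_bb (((b - 1) + d) + 1) (((c + e) - d) - 1) ((((a + 1) - d) + d) - e) d e (by omega) (by omega)
          have hV5 := S1_pt (((b - 1) + d) + 1) ((((((a + 1) - d) + d) - e) + e) - d) (((((c + e) - d) - 1) + d) - e) d e (by omega)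
          have hfin := E1_some ((((((a - d) + d) - e) + e) - d) + d) (((b + d) + 1) - d) (((((c + e) - d) - 1) + d) - e) d e (by omega) (by omega)
          refine ⟨?_, ?_, ?_⟩
          · conv_lhs => rw [e2op, eA12, hT1, hT2, hT3, Option.map_some, hT4, Option.map_some, hT5, Option.bind_some, hfin]
            conv_rhs => rw [he1v, Option.bind_some, e2op, eA12, hV1, hV2, hV3, Option.map_some, hV4, Option.map_some, hV5]
            exact congrArg some (pt_congr (by omega) (by omega) (by omega) (by omega) (by omega))
          · conv_lhs => rw [he1v, Option.bind_some, e2op, eA12, hV1, hV2, hV3, Option.map_some, hV4, Option.map_some, hV5]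
            conv_rhs => rw [eA12, hU1, hU2, Option.map_some, hU3]
            exact congrArg some (pt_congr (by omega) (by omega) (by omega) (by omega) (by omega))
          · rw [eA12, hU1, hU2, Option.map_some, hU3]
            rfl
        case neg =>
          have hT4 := S2_cb ((b + d) + 1) (((c + e) - d) - 1) (((a - d) + d) - e) d e (by omega) (by omega)
          have hT5 := S1_pt ((b + d) + 1) (((((c + e) - d) - 1) + (((a - d) + d) - e)) - d) d ((d + e) - (((c + e) - d) - 1)) (((c + e) - d) - 1) (by omega)
          have hU1 := S2_bb a b c d e (by omega) (by omega)
          have hU2 := E1_some a ((c + e) - d) ((b + d) - e) d e (by omega) (by omega)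
          have hU3 := S2_cb (a + 1) (((c + e) - d) - 1) ((b + d) - e) d e (by omega) (by omega)
          have he1v := E1_some a b c d e (by omega) (by omega)
          have hV1 := S1_pt (a + 1) (b - 1) c d e (by omega)
          have hV2 := S2_bb ((b - 1) + d) ((a + 1) - d) c d e (by omega) (by omega)
          have hV3 := E1_some ((b - 1) + d) ((c + e) - d) ((((a + 1) - d) + d) - e) d e (by omega) (by omega)
          have hV4 := S2_cb (((b - 1) + d) + 1) (((c + e) - d) - 1) ((((a + 1) - d) + d) - e) d e (by omega) (by omega)
          have hV5 := S1_pt (((b - 1) + d) + 1) (((((c + e) - d) - 1) + ((((a + 1) - d) + d) - e)) - d) d ((d + e) - (((c + e) - d) - 1)) (((c + e) - d) - 1) (by omega)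
          have hfin := E1_some ((((((c + e) - d) - 1) + (((a - d) + d) - e)) - d) + ((d + e) - (((c + e) - d) - 1))) (((b + d) + 1) - ((d + e) - (((c + e) - d) - 1))) d ((d + e) - (((c + e) - d) - 1)) (((c + e) - d) - 1) (by omega) (by omega)
          refine ⟨?_, ?_, ?_⟩
          · conv_lhs => rw [e2op, eA12, hT1, hT2, hT3, Option.map_some, hT4, Option.map_some, hT5, Option.bind_some, hfin]
            conv_rhs => rw [he1v, Option.bind_some, e2op, eA12, hV1, hV2, hV3, Option.map_some, hV4, Option.map_some, hV5]
            exact congrArg some (pt_congr (by omega) (by omega) (by omega) (by omega) (by omega))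
          · conv_lhs => rw [he1v, Option.bind_some, e2op, eA12, hV1, hV2, hV3, Option.map_some, hV4, Option.map_some, hV5]
            conv_rhs => rw [eA12, hU1, hU2, Option.map_some, hU3]
            exact congrArg some (pt_congr (by omega) (by omega) (by omega) (by omega) (by omega))
          · rw [eA12, hU1, hU2, Option.map_some, hU3]
            rfl
      case neg =>
        exfalso
        rw [e2op, eA12, hT1, hT2, E1_none (b + d) ((c + e) - d) (((a - d) + d) - e) d e (by omega) (by omega)] at he2
        simp at he2
    case neg =>
      have hT2 := S2_bc (b + d) (a - d) c d e (by omega) (by omega)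
      by_cases hS5 : 1 ≤ e
      case pos =>
        have hT3 := E1_some (b + d) e (((a - d) + c) - e) c ((d + e) - c) (by omega) (by omega)
        have hT4 := S2_cb ((b + d) + 1) (e - 1) (((a - d) + c) - e) c ((d + e) - c) (by omega) (by omega)
        have hT5 := S1_pt ((b + d) + 1) (((e - 1) + (((a - d) + c) - e)) - c) c ((c + ((d + e) - c)) - (e - 1)) (e - 1) (by omega)
        by_cases hb6 : e ≤ b
        case pos =>
          have hU1 := S2_bc a b c d e (by omega) (by omega)
          have hU2 := E1_some a e ((b + c) - e) c ((d + e) - c) (by omega) (by omega)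
          have hU3 := S2_cb (a + 1) (e - 1) ((b + c) - e) c ((d + e) - c) (by omega) (by omega)
          have he1v := E1_some a b c d e (by omega) (by omega)
          have hV1 := S1_pt (a + 1) (b - 1) c d e (by omega)
          have hV2 := S2_bc ((b - 1) + d) ((a + 1) - d) c d e (by omega) (by omega)
          have hV3 := E1_some ((b - 1) + d) e ((((a + 1) - d) + c) - e) c ((d + e) - c) (by omega) (by omega)
          have hV4 := S2_cb (((b - 1) + d) + 1) (e - 1) ((((a + 1) - d) + c) - e) c ((d + e) - c) (by omega) (by omega)
          have hV5 := S1_pt (((b - 1) + d) + 1) (((e - 1) + ((((a + 1) - d) + c) - e)) - c) c ((c + ((d + e) - c)) - (e - 1)) (e - 1) (by omega)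
          have hfin := E1_some ((((e - 1) + (((a - d) + c) - e)) - c) + ((c + ((d + e) - c)) - (e - 1))) (((b + d) + 1) - ((c + ((d + e) - c)) - (e - 1))) c ((c + ((d + e) - c)) - (e - 1)) (e - 1) (by omega) (by omega)
          refine ⟨?_, ?_, ?_⟩
          · conv_lhs => rw [e2op, eA12, hT1, hT2, hT3, Option.map_some, hT4, Option.map_some, hT5, Option.bind_some, hfin]
            conv_rhs => rw [he1v, Option.bind_some, e2op, eA12, hV1, hV2, hV3, Option.map_some, hV4, Option.map_some, hV5]
            exact congrArg some (pt_congr (by omega) (by omega) (by omega) (by omega) (by omega))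
          · conv_lhs => rw [he1v, Option.bind_some, e2op, eA12, hV1, hV2, hV3, Option.map_some, hV4, Option.map_some, hV5]
            conv_rhs => rw [eA12, hU1, hU2, Option.map_some, hU3]
            exact congrArg some (pt_congr (by omega) (by omega) (by omega) (by omega) (by omega))
          · rw [eA12, hU1, hU2, Option.map_some, hU3]
            rfl
        case neg =>
          have hU1 := S2_cc a b c d e (by omega) (by omega)
          have hU2 := E1_some a b c ((c + e) - b) ((b + d) - c) (by omega) (by omega)
          have hU3 := S2_cc (a + 1) (b - 1) c ((c + e) - b) ((b + d) - c) (by omega) (by omega)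
          have he1v := E1_some a b c d e (by omega) (by omega)
          have hV1 := S1_pt (a + 1) (b - 1) c d e (by omega)
          have hV2 := S2_bc ((b - 1) + d) ((a + 1) - d) c d e (by omega) (by omega)
          have hV3 := E1_some ((b - 1) + d) e ((((a + 1) - d) + c) - e) c ((d + e) - c) (by omega) (by omega)
          have hV4 := S2_cb (((b - 1) + d) + 1) (e - 1) ((((a + 1) - d) + c) - e) c ((d + e) - c) (by omega) (by omega)
          have hV5 := S1_pt (((b - 1) + d) + 1) (((e - 1) + ((((a + 1) - d) + c) - e)) - c) c ((c + ((d + e) - c)) - (e - 1)) (e - 1) (by omega)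
          have hfin := E1_some ((((e - 1) + (((a - d) + c) - e)) - c) + ((c + ((d + e) - c)) - (e - 1))) (((b + d) + 1) - ((c + ((d + e) - c)) - (e - 1))) c ((c + ((d + e) - c)) - (e - 1)) (e - 1) (by omega) (by omega)
          refine ⟨?_, ?_, ?_⟩
          · conv_lhs => rw [e2op, eA12, hT1, hT2, hT3, Option.map_some, hT4, Option.map_some, hT5, Option.bind_some, hfin]
            conv_rhs => rw [he1v, Option.bind_some, e2op, eA12, hV1, hV2, hV3, Option.map_some, hV4, Option.map_some, hV5]
            exact congrArg some (pt_congr (by omega) (by omega) (by omega) (by omega) (by omega))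
          · conv_lhs => rw [he1v, Option.bind_some, e2op, eA12, hV1, hV2, hV3, Option.map_some, hV4, Option.map_some, hV5]
            conv_rhs => rw [eA12, hU1, hU2, Option.map_some, hU3]
            exact congrArg some (pt_congr (by omega) (by omega) (by omega) (by omega) (by omega))
          · rw [eA12, hU1, hU2, Option.map_some, hU3]
            rfl
      case neg =>
        exfalso
        rw [e2op, eA12, hT1, hT2, E1_none (b + d) e (((a - d) + c) - e) c ((d + e) - c) (by omega) (by omega)] at he2
        simp at he2
  case neg =>
    have hT2 := S2_cc (b + d) (a - d) c d e (by omega) (by omega)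
    have hT3 := E1_some (b + d) (a - d) c ((c + e) - (a - d)) (((a - d) + d) - c) (by omega) (by omega)
    have hT4 := S2_cc ((b + d) + 1) ((a - d) - 1) c ((c + e) - (a - d)) (((a - d) + d) - c) (by omega) (by omega)
    have hT5 := S1_pt ((b + d) + 1) ((a - d) - 1) c ((c + (((a - d) + d) - c)) - ((a - d) - 1)) ((((a - d) - 1) + ((c + e) - (a - d))) - c) (by omega)
    have hU1 := S2_cc a b c d e (by omega) (by omega)
    have hU2 := E1_some a b c ((c + e) - b) ((b + d) - c) (by omega) (by omega)
    have hU3 := S2_cc (a + 1) (b - 1) c ((c + e) - b) ((b + d) - c) (by omega) (by omega)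
    have he1v := E1_some a b c d e (by omega) (by omega)
    have hV1 := S1_pt (a + 1) (b - 1) c d e (by omega)
    by_cases hb7 : e ≤ (a + 1) - d
    case pos =>
      have hV2 := S2_bc ((b - 1) + d) ((a + 1) - d) c d e (by omega) (by omega)
      have hV3 := E1_some ((b - 1) + d) e ((((a + 1) - d) + c) - e) c ((d + e) - c) (by omega) (by omega)
      have hV4 := S2_cb (((b - 1) + d) + 1) (e - 1) ((((a + 1) - d) + c) - e) c ((d + e) - c) (by omega) (by omega)
      have hV5 := S1_pt (((b - 1) + d) + 1) (((e - 1) + ((((a + 1) - d) + c) - e)) - c) c ((c + ((d + e) - c)) - (e - 1)) (e - 1) (by omega)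
      have hfin := E1_some (((a - d) - 1) + ((c + (((a - d) + d) - c)) - ((a - d) - 1))) (((b + d) + 1) - ((c + (((a - d) + d) - c)) - ((a - d) - 1))) c ((c + (((a - d) + d) - c)) - ((a - d) - 1)) ((((a - d) - 1) + ((c + e) - (a - d))) - c) (by omega) (by omega)
      refine ⟨?_, ?_, ?_⟩
      · conv_lhs => rw [e2op, eA12, hT1, hT2, hT3, Option.map_some, hT4, Option.map_some, hT5, Option.bind_some, hfin]
        conv_rhs => rw [he1v, Option.bind_some, e2op, eA12, hV1, hV2, hV3, Option.map_some, hV4, Option.map_some, hV5]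
        exact congrArg some (pt_congr (by omega) (by omega) (by omega) (by omega) (by omega))
      · conv_lhs => rw [he1v, Option.bind_some, e2op, eA12, hV1, hV2, hV3, Option.map_some, hV4, Option.map_some, hV5]
        conv_rhs => rw [eA12, hU1, hU2, Option.map_some, hU3]
        exact congrArg some (pt_congr (by omega) (by omega) (by omega) (by omega) (by omega))
      · rw [eA12, hU1, hU2, Option.map_some, hU3]
        rfl
    case neg =>
      have hV2 := S2_cc ((b - 1) + d) ((a + 1) - d) c d e (by omega) (by omega)
      have hV3 := E1_some ((b - 1) + d) ((a + 1) - d) c ((c + e) - ((a + 1) - d)) ((((a + 1) - d) + d) - c) (by omega) (by omega)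
      have hV4 := S2_cc (((b - 1) + d) + 1) (((a + 1) - d) - 1) c ((c + e) - ((a + 1) - d)) ((((a + 1) - d) + d) - c) (by omega) (by omega)
      have hV5 := S1_pt (((b - 1) + d) + 1) (((a + 1) - d) - 1) c ((c + ((((a + 1) - d) + d) - c)) - (((a + 1) - d) - 1)) (((((a + 1) - d) - 1) + ((c + e) - ((a + 1) - d))) - c) (by omega)
      have hfin := E1_some (((a - d) - 1) + ((c + (((a - d) + d) - c)) - ((a - d) - 1))) (((b + d) + 1) - ((c + (((a - d) + d) - c)) - ((a - d) - 1))) c ((c + (((a - d) + d) - c)) - ((a - d) - 1)) ((((a - d) - 1) + ((c + e) - (a - d))) - c) (by omega) (by omega)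
      refine ⟨?_, ?_, ?_⟩
      · conv_lhs => rw [e2op, eA12, hT1, hT2, hT3, Option.map_some, hT4, Option.map_some, hT5, Option.bind_some, hfin]
        conv_rhs => rw [he1v, Option.bind_some, e2op, eA12, hV1, hV2, hV3, Option.map_some, hV4, Option.map_some, hV5]
        exact congrArg some (pt_congr (by omega) (by omega) (by omega) (by omega) (by omega))
      · conv_lhs => rw [he1v, Option.bind_some, e2op, eA12, hV1, hV2, hV3, Option.map_some, hV4, Option.map_some, hV5]
        conv_rhs => rw [eA12, hU1, hU2, Option.map_some, hU3]
        exact congrArg some (pt_congr (by omega) (by omega) (by omega) (by omega) (by omega))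
      · rw [eA12, hU1, hU2, Option.map_some, hU3]
        rfl

end AtomicPaper
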